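/- arXiv:1301.1091 — 3 statements merged into one kernel-verified Lean document; each statement's English description precedes it below -/
import Mathlib

section
/- Let π be the bivector field on P defined by a nondegenerate 2-form Ω. Then π is dΩ-twisted Poisson: (1/2)[π,π] = π♯(dΩ). Equivalently, for f,g,h ∈ C∞(P), {f,{g,h}} + {g,{h,f}} + {h,{f,g}} = -dΩ(π♯(df), π♯(dg), π♯(dh)). -/
/-!
For a Hamiltonian field `X_a := π♯(da)` the definition of `π` gives `Ω(Y, X_a) = da(Y)`, so every
term `dΩ(X_f, X_g, X_h)` of the intrinsic formula becomes a first or second derivative of `f, g, h`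
along Hamiltonian fields. The identity then reduces to the antisymmetry `X_a b = - X_b a` of the
bracket together with `X(-u) = -X u`, which the Leibniz rule gives once `2` is invertible.
-/

section Leibniz

variable {A : Type*} [CommRing A] {D : A → A}

theorem leibniz_map_one (hD : ∀ f g, D (f * g) = f * D g + D f * g) : D 1 = 0 := by
  simpa using hD 1 1

theorem leibniz_map_neg (hD : ∀ f g, D (f * g) = f * D g + D f * g) (h2 : IsUnit (2 : A))
    (u : A) : D (-u) = -D u := by
  have hneg_one : D (-1) = 0 := by
    have h := hD (-1) (-1)
    rw [neg_one_mul, neg_neg, leibniz_map_one hD] at h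
    exact (h2.mul_right_eq_zero).mp (by linear_combination h)
  simpa [hneg_one] using hD (-1) u

end Leibniz

section Hamiltonian

variable {A V : Type*} [CommRing A] [AddCommGroup V] [Module A V]
  {ρ : V → A → A} {d : A → Module.Dual A V} {Ω : V →ₗ[A] V →ₗ[A] A}
  {P : Module.Dual A V →ₗ[A] V}

theorem apply_hamiltonian_left (hd : ∀ (f : A) (X : V), d f X = ρ X f)
    (hP : ∀ α : Module.Dual A V, Ω (P α) = -α) (a : A) (Y : V) :
    Ω (P (d a)) Y = -ρ Y a := by
  rw [hP, LinearMap.neg_apply, hd]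

theorem apply_hamiltonian_right (hd : ∀ (f : A) (X : V), d f X = ρ X f)
    (hΩalt : ∀ X Y : V, Ω X Y = -Ω Y X) (hP : ∀ α : Module.Dual A V, Ω (P α) = -α)
    (a : A) (Y : V) : Ω Y (P (d a)) = ρ Y a := by
  rw [hΩalt, apply_hamiltonian_left hd hP, neg_neg]

theorem hamiltonian_apply_antisymm (hd : ∀ (f : A) (X : V), d f X = ρ X f)
    (hΩalt : ∀ X Y : V, Ω X Y = -Ω Y X) (hP : ∀ α : Module.Dual A V, Ω (P α) = -α)
    (a b : A) : ρ (P (d a)) b = -ρ (P (d b)) a := by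
  rw [← apply_hamiltonian_right hd hΩalt hP, apply_hamiltonian_left hd hP]

end Hamiltonian

theorem stmt11_general {A V : Type*} [CommRing A] [Algebra ℝ A]
    [AddCommGroup V] [Module A V]
    (ρ : V → A → A) (lie : V → V → V)
    (hρder : ∀ X (f g : A), ρ X (f * g) = f * ρ X g + ρ X f * g)
    (hlie : ∀ X Y (f : A), ρ (lie X Y) f = ρ X (ρ Y f) - ρ Y (ρ X f))
    (d : A → Module.Dual A V) (hd : ∀ (f : A) (X : V), d f X = ρ X f)
    (Ω : V →ₗ[A] V →ₗ[A] A)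
    (hΩalt : ∀ X Y : V, Ω X Y = - Ω Y X)
    (P : Module.Dual A V →ₗ[A] V)
    (hP : ∀ α : Module.Dual A V, Ω (P α) = - α) :
    ∀ f g h : A,
      d (d h (P (d g))) (P (d f)) + d (d f (P (d h))) (P (d g))
        + d (d g (P (d f))) (P (d h))
      = - (ρ (P (d f)) (Ω (P (d g)) (P (d h)))
           - ρ (P (d g)) (Ω (P (d f)) (P (d h)))
           + ρ (P (d h)) (Ω (P (d f)) (P (d g)))
           - Ω (lie (P (d f)) (P (d g))) (P (d h))
           + Ω (lie (P (d f)) (P (d h))) (P (d g))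
           - Ω (lie (P (d g)) (P (d h))) (P (d f))) := by
  intro f g h
  have h2 : IsUnit (2 : A) := map_ofNat (algebraMap ℝ A) 2 ▸ (isUnit_of_invertible 2).map _
  have hΩ := apply_hamiltonian_right hd hΩalt hP
  have hswap := hamiltonian_apply_antisymm hd hΩalt hP
  have hneg (X : V) := leibniz_map_neg (hρder X) h2
  simp only [hd, hΩ, hlie]
  have hfgh : ρ (P (d f)) (ρ (P (d g)) h) = -ρ (P (d f)) (ρ (P (d h)) g) := by
    rw [hswap g h, hneg]
  have hhfg : ρ (P (d h)) (ρ (P (d f)) g) = -ρ (P (d h)) (ρ (P (d g)) f) := by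
    rw [hswap f g, hneg]
  linear_combination hfgh + hhfg

/-- Let `π` be the bivector defined by a nondegenerate 2-form
`Ω` (via `i_X Ω = α ⟺ π♯(α) = -X`, i.e. `Ω♭ ∘ π♯ = -Id`).  Then `π` is
`dΩ`-twisted Poisson; equivalently, for functions `f,g,h`:
`{f,{g,h}} + {g,{h,f}} + {h,{f,g}} = -dΩ(π♯df, π♯dg, π♯dh)`,
where `{f,g} = π(df,dg) = dg(π♯df)` and `dΩ` is given by the intrinsic
formula.  Functions: commutative ℝ-algebra `A`; vector fields: `A`-module `V`
with bracket `lie` acting by derivations `ρ`; 1-forms: `Module.Dual A V`. -/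
theorem stmt11 {A V : Type*} [CommRing A] [Algebra ℝ A]
    [AddCommGroup V] [Module A V]
    (ρ : V → A → A) (lie : V → V → V)
    (hρder : ∀ X (f g : A), ρ X (f * g) = f * ρ X g + ρ X f * g)
    (hlie : ∀ X Y (f : A), ρ (lie X Y) f = ρ X (ρ Y f) - ρ Y (ρ X f))
    (d : A → Module.Dual A V) (hd : ∀ (f : A) (X : V), d f X = ρ X f)
    (Ω : V →ₗ[A] V →ₗ[A] A)
    (hΩalt : ∀ X Y : V, Ω X Y = - Ω Y X)
    (hΩnd : Function.Bijective (fun X : V => (Ω X : Module.Dual A V)))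
    (P : Module.Dual A V →ₗ[A] V)
    (hP : ∀ α : Module.Dual A V, Ω (P α) = - α) :
    ∀ f g h : A,
      d (d h (P (d g))) (P (d f)) + d (d f (P (d h))) (P (d g))
        + d (d g (P (d f))) (P (d h))
      = - (ρ (P (d f)) (Ω (P (d g)) (P (d h)))
           - ρ (P (d g)) (Ω (P (d f)) (P (d h)))
           + ρ (P (d h)) (Ω (P (d f)) (P (d g)))
           - Ω (lie (P (d f)) (P (d g))) (P (d h))
           + Ω (lie (P (d f)) (P (d h))) (P (d g))
           - Ω (lie (P (d g)) (P (d h))) (P (d f))) :=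
  stmt11_general ρ lie hρder hlie d hd Ω hΩalt P hP
end

section
/- Let G act freely and properly on a manifold P, and let π, π_B be G-invariant bivector fields on P that are gauge related by a basic 2-form B (i.e., B = ρ*B_red for the orbit projection ρ: P → P/G and a 2-form B_red on P/G). Then the reduced bivectors π_red and π_red^B on P/G, defined by Tρ∘π♯∘ρ* = π_red♯ and Tρ∘π_B♯∘ρ* = (π_red^B)♯, are gauge related by B_red. -/
/-! Since `B = ρ*B_red` and `π` descends to `π_red`, the pullback `ρ*` intertwines the gauge
operators `Id + B_red♭ ∘ π_red♯` and `Id + B♭ ∘ π♯`. The latter differs from the identity by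
a basic form, so its inverse maps basic forms to basic forms; hence the reduced operator is
invertible, and pushing `π_B♯ ∘ (Id + B♭ ∘ π♯) = π♯` forward along `Tρ` gives the reduced
gauge relation. -/

theorem Function.Bijective.of_semiconj_of_sub_mem_range {M N : Type*} [AddCommGroup M]
    [AddGroup N] {ι : N →+ M} (hι : Function.Injective ι) {f : M → M} {g : N → N}
    (hsemiconj : Function.Semiconj ι g f) (hf : Function.Bijective f)
    (hrange : ∀ x, f x - x ∈ ι.range) : Function.Bijective g := by
  refine ⟨Function.Injective.of_comp (f := ι) ?_, fun y => ?_⟩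
  · rw [hsemiconj.comp_eq]
    exact hf.1.comp hι
  · obtain ⟨x, hx⟩ := hf.2 (ι y)
    obtain ⟨z, hz⟩ := hrange x
    have hx_eq : x = ι (y - z) := by rw [map_sub, hz, hx, sub_sub_cancel]
    refine ⟨y - z, hι ?_⟩
    rw [hsemiconj, ← hx_eq, hx]

theorem stmt12_general {O V Or Vr : Type*}
    [AddCommGroup O] [Module ℝ O] [AddCommGroup V] [Module ℝ V]
    [AddCommGroup Or] [Module ℝ Or] [AddCommGroup Vr] [Module ℝ Vr]
    (P PB : O →ₗ[ℝ] V) (Pred PBred : Or →ₗ[ℝ] Vr)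
    (Tρ : V →ₗ[ℝ] Vr)
    (ρstar : Or →ₗ[ℝ] O) (hρstarinj : Function.Injective ρstar)
    (Bflat : V →ₗ[ℝ] O) (Bredflat : Vr →ₗ[ℝ] Or)
    (hred : ∀ α, Tρ (P (ρstar α)) = Pred α)
    (hredB : ∀ α, Tρ (PB (ρstar α)) = PBred α)
    (hbasic : ∀ X : V, Bflat X = ρstar (Bredflat (Tρ X)))
    (hbij : Function.Bijective (fun α : O => α + Bflat (P α)))
    (hgauge : ∀ α : O, PB (α + Bflat (P α)) = P α) :
    Function.Bijective (fun α : Or => α + Bredflat (Pred α)) ∧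
      ∀ α : Or, PBred (α + Bredflat (Pred α)) = Pred α := by
  have hsemiconj : Function.Semiconj ρstar (fun α => α + Bredflat (Pred α))
      (fun α => α + Bflat (P α)) :=
    fun α => by simp only [map_add, hbasic, hred]
  have hbasic_diff (α : O) : α + Bflat (P α) - α ∈ ρstar.toAddMonoidHom.range :=
    ⟨Bredflat (Tρ (P α)), by simp [hbasic]⟩
  refine ⟨hbij.of_semiconj_of_sub_mem_range hρstarinj hsemiconj hbasic_diff, fun α => ?_⟩
  rw [← hredB, hsemiconj.eq, hgauge, hred]

/-- Let `G` act freely and properly on `P` and let `π, π_B` be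
`G`-invariant bivector fields on `P`, gauge related by a *basic* 2-form
`B = ρ*B_red`.  Then the reduced bivectors `π_red, π_red^B` on `P/G`
(defined by `Tρ ∘ π♯ ∘ ρ* = π_red♯` etc.) are gauge related by `B_red`.
Encoding: `O`/`Or` are the spaces of 1-forms on `P` and on `P/G`, `V`/`Vr`
the vector fields, `Tρ` the (surjective) pushforward, `ρstar` the (injective)
pullback of 1-forms, `Bflat`/`Bredflat` the flat maps of `B` and `B_red`;
basicness is `B♭ = ρ* ∘ B_red♭ ∘ Tρ`; invariance of `π, π_B` is encoded by
the existence of the reduced maps `Pred, PBred` satisfying `hred, hredB`.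
Conclusion: `Id + B_red♭∘π_red♯` is invertible and
`π_red^B♯ ∘ (Id + B_red♭∘π_red♯) = π_red♯`. -/
theorem stmt12 {O V Or Vr : Type*}
    [AddCommGroup O] [Module ℝ O] [AddCommGroup V] [Module ℝ V]
    [AddCommGroup Or] [Module ℝ Or] [AddCommGroup Vr] [Module ℝ Vr]
    (P PB : O →ₗ[ℝ] V) (Pred PBred : Or →ₗ[ℝ] Vr)
    (Tρ : V →ₗ[ℝ] Vr) (hTρsurj : Function.Surjective Tρ)
    (ρstar : Or →ₗ[ℝ] O) (hρstarinj : Function.Injective ρstar)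
    (Bflat : V →ₗ[ℝ] O) (Bredflat : Vr →ₗ[ℝ] Or)
    (hred : ∀ α, Tρ (P (ρstar α)) = Pred α)
    (hredB : ∀ α, Tρ (PB (ρstar α)) = PBred α)
    (hbasic : ∀ X : V, Bflat X = ρstar (Bredflat (Tρ X)))
    (hbij : Function.Bijective (fun α : O => α + Bflat (P α)))
    (hgauge : ∀ α : O, PB (α + Bflat (P α)) = P α) :
    Function.Bijective (fun α : Or => α + Bredflat (Pred α)) ∧
      ∀ α : Or, PBred (α + Bredflat (Pred α)) = Pred α :=
  stmt12_general P PB Pred PBred Tρ ρstar hρstarinj Bflat Bredflat hred hredB hbasic hbij hgauge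
end

section
/- In the setting above, suppose additionally that W satisfies the vertical-symmetry condition: there is a Lie subalgebra g_W ⊆ g with W_m = {ξ_M(m) : ξ ∈ g_W} for all m. Then: (i) K_W(X,Y) = dA_W(X,Y) for all X ∈ Γ(C) and arbitrary vector fields Y; (ii) dK_W(X,Y,Z) = 0 for all X,Y,Z ∈ Γ(C). -/
/-- Suppose additionally that `W` satisfies the
vertical-symmetry condition: there is a Lie subalgebra `g_W ⊆ 𝔤` with
`W_m = {ξ_M(m) : ξ ∈ g_W}` (encoded: `W` is the `A`-span of the infinitesimal
generators of constant sections from `g_W`).  Then: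
(i) `K_W(X,Y) = dA_W(X,Y)` for all `X ∈ Γ(C)` and arbitrary vector fields `Y`;
(ii) `dK_W(X,Y,Z) = 0` for all `X,Y,Z ∈ Γ(C)` (where `dK_W` is given by the
intrinsic formula for the exterior derivative of the `𝔤`-valued 2-form `K_W`).
Encoding as in STATEMENT 15, with `cst : 𝔤 → 𝔤M` the constant sections
(annihilated by all directional derivatives `ρg`), and the `G`-invariance of
`C` expressed infinitesimally by `hCinv`. -/
theorem stmt16 {A V 𝔤 𝔤M : Type*} [CommRing A] [Algebra ℝ A]
    [AddCommGroup V] [Module A V] [AddCommGroup 𝔤M] [Module A 𝔤M]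
    [Module ℝ 𝔤M] [LieRing 𝔤] [LieAlgebra ℝ 𝔤]
    (ρ : V → A → A) (lie : V → V → V)
    (hlieskew : ∀ X Y, lie X Y = - lie Y X)
    (hlieadd : ∀ X Y Z, lie X (Y + Z) = lie X Y + lie X Z)
    (hleib : ∀ (f : A) X Y, lie X (f • Y) = f • lie X Y + ρ X f • Y)
    (hjacobi : ∀ X Y Z, lie (lie X Y) Z + lie (lie Y Z) X + lie (lie Z X) Y = 0)
    (ρg : V → 𝔤M →+ 𝔤M)
    (hρgleib : ∀ X (f : A) (ξ : 𝔤M), ρg X (f • ξ) = f • ρg X ξ + ρ X f • ξ)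
    (C W : Submodule A V) (hcompl : IsCompl C W)
    (PC PW : V →ₗ[A] V)
    (hPC : ∀ v, PC v ∈ C) (hPW : ∀ v, PW v ∈ W) (hsum : ∀ v, PC v + PW v = v)
    (inf : 𝔤M →ₗ[A] V) (hinf_inj : Function.Injective inf)
    (AW : V →ₗ[A] 𝔤M) (hAW : ∀ v, inf (AW v) = PW v)
    (cst : 𝔤 →ₗ[ℝ] 𝔤M)
    (hconst : ∀ (X : V) (ξ : 𝔤), ρg X (cst ξ) = 0)
    (gW : LieSubalgebra ℝ 𝔤)
    (hvert : W = Submodule.span A (Set.range fun ξ : gW => inf (cst ξ)))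
    (hAWcst : ∀ ξ : gW, AW (inf (cst ξ)) = cst ξ)
    (hCinv : ∀ (ξ : 𝔤) (X : V), X ∈ C → lie X (inf (cst ξ)) ∈ C)
    (dAW : V → V → 𝔤M)
    (hdAW : ∀ X Y, dAW X Y = ρg X (AW Y) - ρg Y (AW X) - AW (lie X Y))
    (K : V → V → 𝔤M) (hK : ∀ X Y, K X Y = dAW (PC X) (PC Y)) :
    (∀ X ∈ C, ∀ Y, K X Y = dAW X Y)
    ∧ ∀ X ∈ C, ∀ Y ∈ C, ∀ Z ∈ C,
        ρg X (K Y Z) - ρg Y (K X Z) + ρg Z (K X Y)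
          - K (lie X Y) Z + K (lie X Z) Y - K (lie Y Z) X = 0 := by
  have hlie0 : ∀ X, lie X 0 = 0 := by
    intro X
    have h := hlieadd X 0 0
    rw [add_zero] at h
    exact left_eq_add.mp h
  have hnegsnd : ∀ X Y, lie X (-Y) = - lie X Y := by
    intro X Y
    have h := hlieadd X Y (-Y)
    rw [add_neg_cancel, hlie0] at h
    exact (neg_eq_of_add_eq_zero_right h.symm).symm
  have hnegfst : ∀ X Y, lie (-X) Y = - lie X Y := by
    intro X Y
    rw [hlieskew (-X) Y, hnegsnd Y X, neg_neg, hlieskew Y X]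
  have hlieaddfst : ∀ X Y Z, lie (X + Y) Z = lie X Z + lie Y Z := by
    intro a b c
    rw [hlieskew (a + b) c, hlieadd, neg_add, hlieskew c a, hlieskew c b,
      neg_neg, neg_neg]
  have hPW0 : ∀ X ∈ C, PW X = 0 := by
    intro X hX
    have h1 : PW X = X - PC X := eq_sub_of_add_eq' (hsum X)
    have h2 : PW X ∈ C := h1 ▸ Submodule.sub_mem C hX (hPC X)
    have h3 : PW X ∈ C ⊓ W := ⟨h2, hPW X⟩
    rw [hcompl.inf_eq_bot, Submodule.mem_bot] at h3
    exact h3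
  have hAW0 : ∀ X ∈ C, AW X = 0 := by
    intro X hX
    apply hinf_inj
    rw [hAW, hPW0 X hX, map_zero]
  have hPC_eq : ∀ X ∈ C, PC X = X := by
    intro X hX
    have h := hsum X
    rw [hPW0 X hX, add_zero] at h
    exact h
  have hAWPW : ∀ v, AW (PW v) = AW v := by
    intro v
    conv_rhs => rw [← hsum v]
    rw [map_add, hAW0 _ (hPC v), zero_add]
  -- key lemma: along C, the derivative of AW of a vertical field is AW of the bracket
  have hkey : ∀ X ∈ C, ∀ w ∈ W, ρg X (AW w) = AW (lie X w) := by
    intro X hX w hw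
    rw [hvert] at hw
    induction hw using Submodule.span_induction with
    | mem v hv =>
      obtain ⟨ξ, rfl⟩ := hv
      rw [hAWcst, hconst, hAW0 _ (hCinv ξ X hX)]
    | zero => rw [map_zero, map_zero, hlie0, map_zero]
    | add a b ha hb iha ihb =>
      rw [map_add, map_add, hlieadd, map_add, iha, ihb]
    | smul a v hv ih =>
      rw [map_smul, hρgleib, hleib, map_add, map_smul, map_smul, ih]
  -- master formula for K with second argument in C
  have hKC : ∀ U Z, Z ∈ C → K U Z = -AW (lie U Z) - ρg Z (AW U) := by
    intro U Z hZ
    rw [hK, hPC_eq Z hZ, hdAW, hAW0 Z hZ, map_zero, hAW0 _ (hPC U), map_zero]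
    have h1 : lie U Z = lie (PC U) Z + lie (PW U) Z := by
      rw [← hlieaddfst, hsum]
    have h2 : AW (lie (PW U) Z) = - ρg Z (AW U) := by
      rw [hlieskew (PW U) Z, map_neg, ← hkey Z hZ (PW U) (hPW U), hAWPW]
    rw [h1, map_add, h2]
    abel
  constructor
  · -- part (i)
    intro X hX Y
    rw [hK, hPC_eq X hX, hdAW, hdAW, hAW0 X hX, map_zero, map_zero]
    have h1 : AW Y = AW (PC Y) + AW (PW Y) := by rw [← map_add, hsum]
    have h2 : lie X Y = lie X (PC Y) + lie X (PW Y) := by rw [← hlieadd, hsum]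
    rw [h1, h2, map_add (ρg X), map_add AW, ← hkey X hX (PW Y) (hPW Y)]
    abel
  · -- part (ii)
    intro X hX Y hY Z hZ
    have e1 : K Y Z = -AW (lie Y Z) := by
      rw [hKC Y Z hZ, hAW0 Y hY, map_zero, sub_zero]
    have e2 : K X Z = -AW (lie X Z) := by
      rw [hKC X Z hZ, hAW0 X hX, map_zero, sub_zero]
    have e3 : K X Y = -AW (lie X Y) := by
      rw [hKC X Y hY, hAW0 X hX, map_zero, sub_zero]
    have hJ : lie (lie X Y) Z = lie (lie X Z) Y - lie (lie Y Z) X := by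
      have h := hjacobi X Y Z
      rw [hlieskew Z X, hnegfst] at h
      refine eq_sub_of_add_eq (sub_eq_zero.mp ?_)
      rw [sub_eq_add_neg]
      exact h
    rw [e1, e2, e3, hKC (lie X Y) Z hZ, hKC (lie X Z) Y hY, hKC (lie Y Z) X hX,
      map_neg, map_neg, map_neg, hJ, map_sub]
    abel
end
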